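/- Let Ω ⊆ ℝⁿ be an open set, let w and 𝔍 be smooth totally antisymmetric third-order tensor fields on Ω (covariant components w_{ijk} and contravariant components 𝔍^{kℓμ}), and let f : Ω → ℝ be smooth. Suppose the inverse relation Σ_{j<k} w_{ijk} 𝔍^{jkℓ} = δ_i^ℓ holds on Ω for all i,ℓ, and that the pair (w,𝔍) satisfies the additional property Σ_k w_{ijk} 𝔍^{kℓμ} = f · (δ_i^ℓ δ_j^μ − δ_i^μ δ_j^ℓ) on Ω for all i,j,ℓ,μ. Then w is closed: ∂w_{ijk}/∂x^ℓ + ∂w_{iℓj}/∂x^k + ∂w_{ikℓ}/∂x^j + ∂w_{jℓk}/∂x^i = 0 on Ω for all i,j,k,ℓ, and therefore w defines a symplectic 3-form. -/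

import Mathlib

/-- Partial derivative in the `i`-th coordinate direction. -/
noncomputable def pd {n : ℕ} (i : Fin n) (f : (Fin n → ℝ) → ℝ) (x : Fin n → ℝ) : ℝ :=
  fderiv ℝ f x (Pi.single i 1)

lemma pd_congr {n : ℕ} (i : Fin n) {f g : (Fin n → ℝ) → ℝ} (h : ∀ y, f y = g y)
    (x : Fin n → ℝ) : pd i f x = pd i g x := by
  have hfg : f = g := funext h
  rw [hfg]

lemma pd_neg {n : ℕ} (i : Fin n) (f : (Fin n → ℝ) → ℝ) (x : Fin n → ℝ) :
    pd i (fun y => -(f y)) x = - pd i f x := by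
  unfold pd
  rw [fderiv_fun_neg]
  simp

lemma pd_zero {n : ℕ} (i : Fin n) (x : Fin n → ℝ) :
    pd i (fun _ => (0:ℝ)) x = 0 := by
  unfold pd
  simp

lemma double_sum {n : ℕ} (g : Fin n → Fin n → ℝ) (hsym : ∀ a b, g a b = g b a)
    (hdiag : ∀ a, g a a = 0) :
    ∑ a, ∑ b, g a b = 2 * ∑ a, ∑ b, if a < b then g a b else 0 := by
  have key : ∀ a b : Fin n, g a b
      = (if a < b then g a b else 0) + (if b < a then g a b else 0) := by
    intro a b
    rcases lt_trichotomy a b with h | h | h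
    · simp [h, (lt_asymm h), (lt_asymm h)]
    · subst h; simp [hdiag, lt_irrefl]
    · simp [h, (lt_asymm h), (lt_asymm h)]
  calc ∑ a, ∑ b, g a b
      = ∑ a, ∑ b, ((if a < b then g a b else 0) + (if b < a then g a b else 0)) := by
        exact Finset.sum_congr rfl fun a _ => Finset.sum_congr rfl fun b _ => key a b
    _ = (∑ a, ∑ b, if a < b then g a b else 0) + ∑ a, ∑ b, if b < a then g a b else 0 := by
        rw [← Finset.sum_add_distrib]
        exact Finset.sum_congr rfl fun a _ => Finset.sum_add_distrib
    _ = (∑ a, ∑ b, if a < b then g a b else 0) + ∑ a, ∑ b, if a < b then g a b else 0 := by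
        congr 1
        rw [Finset.sum_comm]
        exact Finset.sum_congr rfl fun a _ => Finset.sum_congr rfl fun b _ => by
          rw [hsym]
    _ = 2 * ∑ a, ∑ b, if a < b then g a b else 0 := by ring

lemma sum_rot3 {n : ℕ} (g : Fin n → Fin n → Fin n → ℝ) :
    ∑ p, ∑ q, ∑ c, g p q c = ∑ c, ∑ p, ∑ q, g p q c := by
  calc ∑ p, ∑ q, ∑ c, g p q c
      = ∑ p, ∑ c, ∑ q, g p q c := Finset.sum_congr rfl fun p _ => Finset.sum_comm
    _ = ∑ c, ∑ p, ∑ q, g p q c := Finset.sum_comm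

lemma fin3_pigeon : ∀ a b c d : Fin 3,
    a = b ∨ a = c ∨ a = d ∨ b = c ∨ b = d ∨ c = d := by decide

/-- If the smooth totally antisymmetric third-order tensor fields `w` and `Jt` are inverse
to each other and moreover satisfy `Σ_k w_{ijk} 𝔍^{kℓμ} = f (δ_iℓ δ_jμ − δ_iμ δ_jℓ)` for a
smooth function `f`, then `w` is closed, and hence defines a symplectic 3-form. -/
theorem strong_inverse_implies_closed {n : ℕ}
    (Ω : Set (Fin n → ℝ)) (hΩ : IsOpen Ω)
    (w Jt : (Fin n → ℝ) → Fin n → Fin n → Fin n → ℝ)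
    (f : (Fin n → ℝ) → ℝ)
    (hwsmooth : ∀ i j k, ContDiffOn ℝ (⊤ : ℕ∞) (fun x => w x i j k) Ω)
    (hJsmooth : ∀ i j k, ContDiffOn ℝ (⊤ : ℕ∞) (fun x => Jt x i j k) Ω)
    (hfsmooth : ContDiffOn ℝ (⊤ : ℕ∞) f Ω)
    (hwskew12 : ∀ x, ∀ i j k, w x i j k = - w x j i k)
    (hwskew23 : ∀ x, ∀ i j k, w x i j k = - w x i k j)
    (hJskew12 : ∀ x, ∀ i j k, Jt x i j k = - Jt x j i k)
    (hJskew23 : ∀ x, ∀ i j k, Jt x i j k = - Jt x i k j)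
    (hinv : ∀ x ∈ Ω, ∀ i l,
      (∑ j, ∑ k, if j < k then w x i j k * Jt x j k l else 0)
        = if i = l then (1 : ℝ) else 0)
    (hprop : ∀ x ∈ Ω, ∀ i j l μ : Fin n,
      ∑ k, w x i j k * Jt x k l μ
        = f x * ((if i = l then (1:ℝ) else 0) * (if j = μ then (1:ℝ) else 0)
            - (if i = μ then (1:ℝ) else 0) * (if j = l then (1:ℝ) else 0))) :
    ∀ x ∈ Ω, ∀ i j k l,
      pd l (fun y => w y i j k) x + pd k (fun y => w y i l j) x
        + pd j (fun y => w y i k l) x + pd i (fun y => w y j l k) x = 0 := by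
  intro x hx i j k l
  -- pointwise vanishing on repeated indices
  have hW11 : ∀ y, ∀ a b : Fin n, w y a a b = 0 := by
    intro y a b; have := hwskew12 y a a b; linarith
  have hW23 : ∀ y, ∀ a b : Fin n, w y a b b = 0 := by
    intro y a b; have := hwskew23 y a b b; linarith
  have hW13 : ∀ y, ∀ a b : Fin n, w y a b a = 0 := by
    intro y a b
    have h1 := hwskew23 y a b a
    have h2 := hW11 y a b
    rw [h2] at h1; linarith
  -- cyclic invariance
  have Jcyc : ∀ a b c : Fin n, Jt x a b c = Jt x c a b := by
    intro a b c
    rw [hJskew23 x a b c, hJskew12 x a c b, neg_neg]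
  have Wcyc : ∀ y, ∀ a b c : Fin n, w y a b c = w y c a b := by
    intro y a b c
    rw [hwskew23 y a b c, hwskew12 y a c b, neg_neg]
  -- doubled inverse relation
  have hinv2 : ∀ a c : Fin n,
      ∑ p, ∑ q, w x a p q * Jt x p q c = 2 * (if a = c then (1:ℝ) else 0) := by
    intro a c
    rw [double_sum (fun p q => w x a p q * Jt x p q c)
      (fun p q => show w x a p q * Jt x p q c = w x a q p * Jt x q p c by
        rw [hwskew23 x a p q, hJskew12 x p q c]; ring)
      (fun p => show w x a p p * Jt x p p c = 0 by rw [hW23 x a p]; ring)]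
    rw [hinv x hx a c]
  -- identity A : f x * (n - 1) = 2
  have hA : f x * ((n:ℝ) - 1) = 2 := by
    have h1 : ∀ p : Fin n, (∑ q, w x i p q * Jt x q i p)
        = f x * (1 - if i = p then (1:ℝ) else 0) := by
      intro p
      have h := hprop x hx i p i p
      by_cases hip : i = p <;> simp [hip] at h ⊢ <;> linarith
    have h2 : ∑ p, ∑ q, w x i p q * Jt x q i p = f x * ((n:ℝ) - 1) := by
      rw [Finset.sum_congr rfl fun p _ => h1 p]
      rw [← Finset.mul_sum]
      congr 1
      rw [Finset.sum_sub_distrib]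
      simp
    have h3 : ∑ p, ∑ q, w x i p q * Jt x q i p = 2 := by
      have : ∀ p q : Fin n, w x i p q * Jt x q i p = w x i p q * Jt x p q i := by
        intro p q; rw [Jcyc q i p]
      rw [Finset.sum_congr rfl fun p _ => Finset.sum_congr rfl fun q _ => this p q]
      rw [hinv2 i i]
      simp
    rw [← h2, h3]
  -- identity B : f x * w = w
  have hB : ∀ a b m : Fin n, f x * (2 * w x a b m) = 2 * w x a b m := by
    intro a b m
    have e1 : ∑ p, ∑ q, (∑ c, w x a b c * Jt x c p q) * w x p q m
        = f x * (2 * w x a b m) := by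
      have step : ∀ p q : Fin n, (∑ c, w x a b c * Jt x c p q) * w x p q m
          = (if a = p then (1:ℝ) else 0) * ((if b = q then (1:ℝ) else 0) * (f x * w x p q m))
            - (if a = q then (1:ℝ) else 0) * ((if b = p then (1:ℝ) else 0) * (f x * w x p q m)) := by
        intro p q
        rw [hprop x hx a b p q]
        ring
      rw [Finset.sum_congr rfl fun p _ => Finset.sum_congr rfl fun q _ => step p q]
      rw [Finset.sum_congr rfl fun p _ => Finset.sum_sub_distrib _ _,
        Finset.sum_sub_distrib]
      have T1 : ∑ p, ∑ q, (if a = p then (1:ℝ) else 0)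
          * ((if b = q then (1:ℝ) else 0) * (f x * w x p q m)) = f x * w x a b m := by
        simp
      have T2 : ∑ p, ∑ q, (if a = q then (1:ℝ) else 0)
          * ((if b = p then (1:ℝ) else 0) * (f x * w x p q m)) = f x * w x b a m := by
        rw [Finset.sum_comm]
        simp
      rw [T1, T2, hwskew12 x b a m]
      ring
    have e2 : ∑ p, ∑ q, (∑ c, w x a b c * Jt x c p q) * w x p q m
        = 2 * w x a b m := by
      have step : ∀ p q : Fin n, (∑ c, w x a b c * Jt x c p q) * w x p q m
          = ∑ c, w x a b c * (w x m p q * Jt x p q c) := by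
        intro p q
        rw [Finset.sum_mul]
        refine Finset.sum_congr rfl fun c _ => ?_
        rw [show Jt x c p q = Jt x p q c by rw [Jcyc c p q, Jcyc q c p],
          Wcyc x p q m]
        ring
      have swap2 : ∀ c : Fin n, ∑ p, ∑ q, w x a b c * (w x m p q * Jt x p q c)
          = w x a b c * (2 * (if m = c then (1:ℝ) else 0)) := by
        intro c
        rw [show (∑ p, ∑ q, w x a b c * (w x m p q * Jt x p q c))
            = w x a b c * ∑ p, ∑ q, w x m p q * Jt x p q c by
          rw [Finset.mul_sum]
          exact Finset.sum_congr rfl fun p _ => by rw [Finset.mul_sum]]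
        rw [hinv2 m c]
      calc ∑ p, ∑ q, (∑ c, w x a b c * Jt x c p q) * w x p q m
          = ∑ p, ∑ q, ∑ c, w x a b c * (w x m p q * Jt x p q c) :=
            Finset.sum_congr rfl fun p _ => Finset.sum_congr rfl fun q _ => step p q
        _ = ∑ c, ∑ p, ∑ q, w x a b c * (w x m p q * Jt x p q c) := sum_rot3 _
        _ = ∑ c, w x a b c * (2 * if m = c then (1:ℝ) else 0) :=
            Finset.sum_congr rfl fun c _ => swap2 c
        _ = 2 * w x a b m := by
            simp only [mul_ite, mul_one, mul_zero, Finset.sum_ite_eq, Finset.mem_univ,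
              if_true]
            ring
    rw [← e1, e2]
  -- identity C : some component of w is nonzero at x
  have hC : ∃ b c : Fin n, w x i b c ≠ 0 := by
    by_contra h
    push_neg at h
    have h0 : (∑ p, ∑ q, if p < q then w x i p q * Jt x p q i else 0) = 0 :=
      Finset.sum_eq_zero fun p _ => Finset.sum_eq_zero fun q _ => by
        rw [h p q]; simp
    have h1 := hinv x hx i i
    rw [h0] at h1
    simp at h1
  -- conclude f x = 1 and n = 3
  obtain ⟨b, c, hbc⟩ := hC
  have hf1 : f x = 1 := by
    have hb := hB i b c
    have hz : (f x - 1) * (2 * w x i b c) = 0 := by linarith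
    rcases mul_eq_zero.mp hz with h | h
    · linarith
    · exfalso; apply hbc; linarith
  have hn3 : (n : ℝ) = 3 := by rw [hf1] at hA; linarith
  have hn : n = 3 := by exact_mod_cast hn3
  subst hn
  -- now n = 3 : two of the four indices must coincide, and the expression vanishes
  have pd0 : ∀ (d : Fin 3) (g : (Fin 3 → ℝ) → ℝ), (∀ y, g y = 0) → pd d g x = 0 := by
    intro d g hg
    rw [pd_congr d (g := fun _ => (0:ℝ)) hg x]
    exact pd_zero d x
  have pdneg : ∀ (d : Fin 3) (g h : (Fin 3 → ℝ) → ℝ),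
      (∀ y, g y = - h y) → pd d g x = - pd d h x := by
    intro d g h hg
    rw [pd_congr d (g := fun y => -(h y)) hg x]
    exact pd_neg d h x
  have tri : i = j ∨ i = k ∨ i = l ∨ j = k ∨ j = l ∨ k = l := fin3_pigeon i j k l
  rcases tri with h | h | h | h | h | h
  · subst h
    have t1 := pd0 l (fun y => w y i i k) (fun y => hW11 y i k)
    have t2 := pd0 k (fun y => w y i l i) (fun y => hW13 y i l)
    have t4 := pdneg i (fun y => w y i l k) (fun y => w y i k l)
      (fun y => hwskew23 y i l k)
    rw [t1, t2, t4]; ring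
  · subst h
    have t1 := pd0 l (fun y => w y i j i) (fun y => hW13 y i j)
    have t3 := pd0 j (fun y => w y i i l) (fun y => hW11 y i l)
    have t4 := pdneg i (fun y => w y j l i) (fun y => w y i l j)
      (fun y => show w y j l i = -w y i l j by
        rw [hwskew12 y j l i, hwskew23 y l j i, hwskew12 y l i j]; ring)
    rw [t1, t3, t4]; ring
  · subst h
    have t2 := pd0 k (fun y => w y i i j) (fun y => hW11 y i j)
    have t3 := pd0 j (fun y => w y i k i) (fun y => hW13 y i k)
    have t4 := pdneg i (fun y => w y j i k) (fun y => w y i j k)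
      (fun y => hwskew12 y j i k)
    rw [t2, t3, t4]; ring
  · subst h
    have t1 := pd0 l (fun y => w y i j j) (fun y => hW23 y i j)
    have t3 := pdneg j (fun y => w y i j l) (fun y => w y i l j)
      (fun y => hwskew23 y i j l)
    have t4 := pd0 i (fun y => w y j l j) (fun y => hW13 y j l)
    rw [t1, t3, t4]; ring
  · subst h
    have t2 := pd0 k (fun y => w y i j j) (fun y => hW23 y i j)
    have t3 := pdneg j (fun y => w y i k j) (fun y => w y i j k)
      (fun y => hwskew23 y i k j)
    have t4 := pd0 i (fun y => w y j j k) (fun y => hW11 y j k)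
    rw [t2, t3, t4]; ring
  · subst h
    have t2 := pdneg k (fun y => w y i k j) (fun y => w y i j k)
      (fun y => hwskew23 y i k j)
    have t3 := pd0 j (fun y => w y i k k) (fun y => hW23 y i k)
    have t4 := pd0 i (fun y => w y j k k) (fun y => hW23 y j k)
    rw [t2, t3, t4]; ring
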